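/- arXiv:1608.04814 — 4 statements merged into one kernel-verified Lean document; each statement's English description precedes it below -/
import Mathlib

section
/- (Gentle Measurement lemma.) Let ρ and X be positive semidefinite d × d complex matrices with 0 ≤ X ≤ I. Then ‖ρ − √X ρ √X‖₁ ≤ 2·√(Tr ρ)·√(Tr(ρ(I − X))), where √X denotes the positive semidefinite square root of X and ‖A‖₁ = Tr√(A†A) is the trace norm. -/
open Matrix
open scoped ComplexOrder

/-- The square root of a positive semidefinite matrix (removed from Mathlib; old definition). -/
noncomputable def Matrix.PosSemidef.sqrt {𝕜 : Type*} [RCLike 𝕜] {n : Type*} [Fintype n]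
    [DecidableEq n] {A : Matrix n n 𝕜} (hA : Matrix.PosSemidef A) : Matrix n n 𝕜 :=
  hA.1.eigenvectorUnitary.1 * diagonal ((↑) ∘ (√·) ∘ hA.1.eigenvalues) *
    (star hA.1.eigenvectorUnitary : Matrix n n 𝕜)

/-- The trace norm `‖A‖₁ = Tr √(AᴴA)` of a complex matrix. -/
noncomputable def traceNorm {ι : Type*} [Fintype ι] [DecidableEq ι]
    (A : Matrix ι ι ℂ) : ℝ :=
  ((Matrix.posSemidef_conjTranspose_mul_self A).sqrt.trace).re

/-! Put `R = √ρ` and `W = 1 - √X`, so that `ρ - √X ρ √X = W R R + √X R R W`. This difference is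
Hermitian, hence its trace norm is `Re Tr(S (ρ - √X ρ √X))` for the contraction
`S = sign(ρ - √X ρ √X)`. Cauchy–Schwarz for the Hilbert–Schmidt inner product bounds each of the
two resulting terms by `√Tr(ρ (1 - X)) √Tr ρ`, using `W² ≤ 1 - X` (from `(1 - √x)² ≤ 1 - x` on
`[0, 1]`) and `X ≤ 1`. -/

open scoped MatrixOrder

section CFC

variable {A : Type*} [PartialOrder A] [Ring A] [StarRing A] [TopologicalSpace A]
  [StarOrderedRing A] [Algebra ℝ A] [ContinuousFunctionalCalculus ℝ A IsSelfAdjoint]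

lemma cfc_sign_mul_self_le_one (a : A)
    (ha : ContinuousOn (fun x : ℝ ↦ (SignType.sign x : ℝ)) (spectrum ℝ a)) :
    cfc (fun x : ℝ ↦ (SignType.sign x : ℝ)) a * cfc (fun x : ℝ ↦ (SignType.sign x : ℝ)) a ≤ 1 := by
  rw [← cfc_mul ..]
  exact cfc_le_one _ _ fun x _ ↦ by generalize SignType.sign x = s; cases s <;> norm_num

variable [NonnegSpectrumClass ℝ A] [IsSemitopologicalRing A] [T2Space A]

lemma CFC.one_sub_sqrt_sq_le {a : A} (ha₀ : 0 ≤ a) (ha₁ : a ≤ 1) :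
    (1 - CFC.sqrt a) ^ 2 ≤ 1 - a := by
  rw [CFC.sqrt_eq_real_sqrt a, cfcₙ_eq_cfc]
  have hl : (1 - cfc Real.sqrt a) ^ 2 = cfc (fun x ↦ (1 - √x) ^ 2) a := by
    rw [cfc_pow .., cfc_sub .., cfc_const_one ℝ a]
  have hr : 1 - a = cfc (fun x : ℝ ↦ 1 - x) a := by
    rw [cfc_sub .., cfc_const_one ℝ a, cfc_id' ℝ a]
  rw [hl, hr]
  refine cfc_mono fun x hx ↦ ?_
  have hx₀ : 0 ≤ x := spectrum_nonneg_of_nonneg ha₀ hx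
  have hx₁ : √x ≤ 1 := Real.sqrt_le_one.mpr ((CFC.le_one_iff a).mp ha₁ x hx)
  nlinarith [Real.sq_sqrt hx₀, Real.sqrt_nonneg x]

end CFC

namespace Matrix

variable {𝕜 n : Type*} [RCLike 𝕜] [Fintype n] [DecidableEq n]

lemma PosSemidef.sqrt_eq_cfcSqrt {A : Matrix n n 𝕜} (hA : A.PosSemidef) :
    hA.sqrt = CFC.sqrt A := by
  rw [CFC.sqrt_eq_cfc, cfc_nnreal_eq_real _ A, hA.1.cfc_eq, IsHermitian.cfc,
    Unitary.conjStarAlgAut_apply, Matrix.PosSemidef.sqrt]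
  congr 3
  funext i
  simp [Real.coe_toNNReal', max_eq_left (hA.eigenvalues_nonneg i)]

omit [DecidableEq n] in
lemma re_trace_conj_le_conj {P Q : Matrix n n 𝕜} (hPQ : P ≤ Q) (C : Matrix n n 𝕜) :
    RCLike.re (C * P * Cᴴ).trace ≤ RCLike.re (C * Q * Cᴴ).trace :=
  RCLike.re_le_re <| (tracePositiveLinearMap n ℝ 𝕜).monotone' <|
    star_right_conjugate_le_conjugate hPQ C

/-- Cauchy–Schwarz for the Hilbert–Schmidt inner product `⟪A, B⟫ = Tr(B Aᴴ)`, which Mathlib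
provides as the inner product induced by the identity matrix. -/
lemma re_trace_mul_conjTranspose_le (A B : Matrix n n 𝕜) :
    RCLike.re (B * Aᴴ).trace ≤
      √(RCLike.re (A * Aᴴ).trace) * √(RCLike.re (B * Bᴴ).trace) := by
  let _ := toMatrixSeminormedAddCommGroup (1 : Matrix n n 𝕜) PosSemidef.one
  let _ := toMatrixInnerProductSpace (1 : Matrix n n 𝕜) PosSemidef.one
  have h : RCLike.re (B * 1 * Aᴴ).trace ≤
      √(RCLike.re (A * 1 * Aᴴ).trace) * √(RCLike.re (B * 1 * Bᴴ).trace) :=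
    re_inner_le_norm (𝕜 := 𝕜) A B
  simpa only [Matrix.mul_one] using h

lemma re_trace_mul_conjTranspose_mul_le {T : Matrix n n 𝕜} (hT : Tᴴ * T ≤ 1)
    (A B : Matrix n n 𝕜) :
    RCLike.re (T * Aᴴ * B).trace ≤
      √(RCLike.re (A * Aᴴ).trace) * √(RCLike.re (B * Bᴴ).trace) := by
  have hcomm : T * Aᴴ * B = (A * Tᴴ)ᴴ * B := by
    rw [conjTranspose_mul, conjTranspose_conjTranspose]
  have hcontr : RCLike.re ((A * Tᴴ) * (A * Tᴴ)ᴴ).trace ≤ RCLike.re (A * Aᴴ).trace := by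
    simpa only [conjTranspose_mul, conjTranspose_conjTranspose, Matrix.mul_assoc,
      Matrix.mul_one] using re_trace_conj_le_conj hT A
  rw [hcomm, trace_mul_comm]
  exact (re_trace_mul_conjTranspose_le _ B).trans
    (mul_le_mul_of_nonneg_right (Real.sqrt_le_sqrt hcontr) (Real.sqrt_nonneg _))

lemma re_trace_mul_conjTranspose_mul_le_of_le {T C D P Q : Matrix n n 𝕜} (hT : Tᴴ * T ≤ 1)
    (hC : C * Cᴴ ≤ P) (hD : D * Dᴴ ≤ Q) (R : Matrix n n 𝕜) :
    RCLike.re (T * (R * C)ᴴ * (R * D)).trace ≤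
      √(RCLike.re (Rᴴ * R * P).trace) * √(RCLike.re (Rᴴ * R * Q).trace) := by
  have hconj : ∀ {E F : Matrix n n 𝕜}, E * Eᴴ ≤ F →
      RCLike.re ((R * E) * (R * E)ᴴ).trace ≤ RCLike.re (Rᴴ * R * F).trace := fun {E F} h ↦
    calc RCLike.re ((R * E) * (R * E)ᴴ).trace = RCLike.re (R * (E * Eᴴ) * Rᴴ).trace := by
          simp only [conjTranspose_mul, Matrix.mul_assoc]
      _ ≤ RCLike.re (R * F * Rᴴ).trace := re_trace_conj_le_conj h R
      _ = RCLike.re (Rᴴ * R * F).trace := by rw [trace_mul_comm, Matrix.mul_assoc]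
  exact (re_trace_mul_conjTranspose_mul_le hT _ _).trans <| mul_le_mul
    (Real.sqrt_le_sqrt (hconj hC)) (Real.sqrt_le_sqrt (hconj hD)) (Real.sqrt_nonneg _)
    (Real.sqrt_nonneg _)

lemma traceNorm_eq_re_trace_cfcAbs (A : Matrix n n ℂ) :
    traceNorm A = (CFC.abs A).trace.re := by
  rw [traceNorm, PosSemidef.sqrt_eq_cfcSqrt, CFC.abs, star_eq_conjTranspose]

lemma IsHermitian.exists_traceNorm_eq_re_trace_mul {A : Matrix n n ℂ} (hA : A.IsHermitian) :
    ∃ S : Matrix n n ℂ, Sᴴ * S ≤ 1 ∧ traceNorm A = (S * A).trace.re := by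
  have hA' : IsSelfAdjoint A := hA
  have hcont : ContinuousOn (fun x : ℝ ↦ (SignType.sign x : ℝ)) (spectrum ℝ A) :=
    A.finite_real_spectrum.continuousOn _
  set S := cfc (fun x : ℝ ↦ (SignType.sign x : ℝ)) A
  have hS : Sᴴ = S := (cfc_predicate _ A : IsSelfAdjoint S)
  have hSA : S * A = cfc (fun x : ℝ ↦ ‖x‖) A := by
    simp only [Real.norm_eq_abs]
    rw [← cfc_congr fun x _ ↦ sign_mul_self x, cfc_mul .., cfc_id' ℝ A]
  refine ⟨S, by rw [hS]; exact cfc_sign_mul_self_le_one A hcont, ?_⟩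
  rw [traceNorm_eq_re_trace_cfcAbs, CFC.abs_eq_cfc_norm A, hSA]

end Matrix

/-- Gentle Measurement lemma: for positive semidefinite `ρ`, `X` with `0 ≤ X ≤ I`,
`‖ρ − √X ρ √X‖₁ ≤ 2 √(Tr ρ) √(Tr(ρ(I − X)))`. -/
theorem gentle_measurement (d : ℕ) (ρ X : Matrix (Fin d) (Fin d) ℂ)
    (hρ : ρ.PosSemidef) (hX : X.PosSemidef) (hX1 : (1 - X).PosSemidef) :
    traceNorm (ρ - hX.sqrt * ρ * hX.sqrt) ≤
      2 * Real.sqrt ρ.trace.re * Real.sqrt ((ρ * (1 - X)).trace.re) := by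
  rw [hX.sqrt_eq_cfcSqrt]
  set M := CFC.sqrt X
  set R := CFC.sqrt ρ
  set W := 1 - M
  have hM : Mᴴ = M := (CFC.sqrt_nonneg X).isSelfAdjoint
  have hR : Rᴴ = R := (CFC.sqrt_nonneg ρ).isSelfAdjoint
  have hW : Wᴴ = W := by simp only [W, conjTranspose_sub, conjTranspose_one, hM]
  have hRR : R * R = ρ := CFC.sqrt_mul_sqrt_self ρ hρ.nonneg
  have hMM : M * M = X := CFC.sqrt_mul_sqrt_self X hX.nonneg
  have hWW : W * Wᴴ ≤ 1 - X := by
    rw [hW, ← sq]; exact CFC.one_sub_sqrt_sq_le hX.nonneg (sub_nonneg.mp hX1.nonneg)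
  have hD : (ρ - M * ρ * M).IsHermitian :=
    hρ.1.sub (by simpa only [hM] using (hρ.mul_mul_conjTranspose_same M).1)
  obtain ⟨S, hS, hnorm⟩ := hD.exists_traceNorm_eq_re_trace_mul
  have hsplit : S * (ρ - M * ρ * M) = S * (R * W)ᴴ * (R * 1) + S * (R * M)ᴴ * (R * W) := by
    simp only [conjTranspose_mul, hR, hW, hM, W, ← hRR]
    noncomm_ring
  have hM1 : M * Mᴴ ≤ 1 := by rw [hM, hMM]; exact sub_nonneg.mp hX1.nonneg
  have hone : (1 : Matrix (Fin d) (Fin d) ℂ) * 1ᴴ ≤ 1 := by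
    rw [conjTranspose_one, Matrix.mul_one]
  have h₁ := re_trace_mul_conjTranspose_mul_le_of_le hS hWW hone R
  have h₂ := re_trace_mul_conjTranspose_mul_le_of_le hS hM1 hWW R
  simp only [RCLike.re_to_complex, hR, hRR, Matrix.mul_one] at h₁ h₂
  rw [hnorm, hsplit, Matrix.mul_one, trace_add, Complex.add_re]
  linarith
end

section
/- Let d, n ≥ 1 and let Π^{sym}_n be the orthogonal projector onto the symmetric subspace of (ℂ^d)^{⊗n} (the subspace of vectors invariant under all permutations of the n tensor factors). Then Π^{sym}_n = c_{n,d} · ∫ |θ⟩⟨θ|^{⊗n} dθ, where c_{n,d} = binomial(n + d − 1, n) and the integral is over unit vectors θ ∈ ℂ^d with respect to the Haar (unitarily invariant) probability measure on the unit sphere of ℂ^d. -/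
open Matrix MeasureTheory Finset
open scoped BigOperators ComplexConjugate ComplexOrder

noncomputable section

namespace DeFinetti

/-- The `n`-fold tensor power `ψ^{⊗n}` of a vector `ψ ∈ ℂ^d`, as a vector in `(ℂ^d)^{⊗n}`
(indexed by functions `Fin n → Fin d`). -/
def tpow {d : ℕ} (ψ : Fin d → ℂ) (n : ℕ) : (Fin n → Fin d) → ℂ :=
  fun x => ∏ i, ψ (x i)

/-- The rank-one operator `|θ⟩⟨θ|^{⊗n}` on `(ℂ^d)^{⊗n}`, as a matrix. -/
def tpowProj {d : ℕ} (θ : Fin d → ℂ) (n : ℕ) : Matrix (Fin n → Fin d) (Fin n → Fin d) ℂ :=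
  Matrix.of fun x y => tpow θ n x * conj (tpow θ n y)

/-- `ψ ∈ ℂ^d` is a unit vector. -/
def IsUnitVec {d : ℕ} (ψ : Fin d → ℂ) : Prop := ∑ i, Complex.normSq (ψ i) = 1

/-- `μ` is the Haar (unitarily invariant) probability measure on the unit sphere of `ℂ^d`,
viewed as a measure on `ℂ^d` concentrated on the sphere. -/
def IsHaarOnSphere {d : ℕ} (μ : Measure (Fin d → ℂ)) : Prop :=
  IsProbabilityMeasure μ ∧
  μ {ψ : Fin d → ℂ | IsUnitVec ψ} = 1 ∧
  ∀ U ∈ Matrix.unitaryGroup (Fin d) ℂ, μ.map (fun ψ => Matrix.mulVec U ψ) = μ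

/-- Entrywise (Bochner) integral of a matrix-valued function against a measure on `ℂ^d`. -/
def matIntegral {d : ℕ} {ι : Type*} (μ : Measure (Fin d → ℂ))
    (f : (Fin d → ℂ) → Matrix ι ι ℂ) : Matrix ι ι ℂ :=
  Matrix.of fun x y => ∫ ψ, f ψ x y ∂μ

/-- Invariance of an operator on `(ℂ^d)^{⊗m}` under every permutation of the `m` tensor
factors. -/
def PermInvariant {d m : ℕ} (ρ : Matrix (Fin m → Fin d) (Fin m → Fin d) ℂ) : Prop :=
  ∀ σ : Equiv.Perm (Fin m), ∀ x y, ρ (x ∘ σ) (y ∘ σ) = ρ x y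

/-- A density matrix: positive semidefinite with unit trace. -/
def IsDensityMatrix {ι : Type*} [Fintype ι] (ρ : Matrix ι ι ℂ) : Prop :=
  ρ.PosSemidef ∧ ρ.trace = 1

/-- The partial trace over the last `k` of `n + k` tensor factors. -/
def ptrace {d : ℕ} (n k : ℕ) (ρ : Matrix (Fin (n+k) → Fin d) (Fin (n+k) → Fin d) ℂ) :
    Matrix (Fin n → Fin d) (Fin n → Fin d) ℂ :=
  Matrix.of fun x y => ∑ z : Fin k → Fin d, ρ (Fin.append x z) (Fin.append y z)

/-- The compression `(I ⊗ ⟨ψ|^{⊗k}) ρ (I ⊗ |ψ⟩^{⊗k})` of an operator `ρ` on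
`(ℂ^d)^{⊗(n+k)}`, an operator on `(ℂ^d)^{⊗n}`. -/
def compress {d : ℕ} (n k : ℕ) (ρ : Matrix (Fin (n+k) → Fin d) (Fin (n+k) → Fin d) ℂ)
    (ψ : Fin d → ℂ) : Matrix (Fin n → Fin d) (Fin n → Fin d) ℂ :=
  Matrix.of fun x y => ∑ z : Fin k → Fin d, ∑ w : Fin k → Fin d,
    conj (tpow ψ k z) * ρ (Fin.append x z) (Fin.append y w) * tpow ψ k w

/-- The squared overlap `x_{θψ} = |⟨θ|ψ⟩|²` of two vectors in `ℂ^d`. -/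
def overlap {d : ℕ} (θ ψ : Fin d → ℂ) : ℝ := Complex.normSq (∑ i, conj (θ i) * ψ i)

/-- The projector `P_{ψ,S}` acting as `|ψ⟩⟨ψ|` on the tensor factors outside `S` and as
`I - |ψ⟩⟨ψ|` on the tensor factors in `S`. -/
def projOfSet {d : ℕ} (ψ : Fin d → ℂ) (n : ℕ) (S : Finset (Fin n)) :
    Matrix (Fin n → Fin d) (Fin n → Fin d) ℂ :=
  Matrix.of fun x y => ∏ i, if i ∈ S
    then (if x i = y i then (1:ℂ) else 0) - ψ (x i) * conj (ψ (y i))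
    else ψ (x i) * conj (ψ (y i))

/-- The projector `P_ψ^{≥ r} = Σ_{|S| ≥ r} P_{ψ,S}`. -/
def projGE {d : ℕ} (ψ : Fin d → ℂ) (n r : ℕ) : Matrix (Fin n → Fin d) (Fin n → Fin d) ℂ :=
  ∑ S ∈ Finset.univ.filter (fun S : Finset (Fin n) => r ≤ S.card), projOfSet ψ n S

/-- The projector `P_ψ^{< r} = Σ_{|S| ≤ r - 1} P_{ψ,S}`. -/
def projLT {d : ℕ} (ψ : Fin d → ℂ) (n r : ℕ) : Matrix (Fin n → Fin d) (Fin n → Fin d) ℂ :=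
  ∑ S ∈ Finset.univ.filter (fun S : Finset (Fin n) => S.card < r), projOfSet ψ n S

/-- The trace norm `‖A‖₁ = Tr √(AᴴA)` of a matrix. -/
def traceNorm {ι : Type*} [Fintype ι] [DecidableEq ι] (A : Matrix ι ι ℂ) : ℝ :=
  (((Matrix.posSemidef_conjTranspose_mul_self A).1.eigenvectorUnitary : Matrix ι ι ℂ) *
    Matrix.diagonal (((↑) : ℝ → ℂ) ∘ (Real.sqrt ·) ∘ (Matrix.posSemidef_conjTranspose_mul_self A).1.eigenvalues) *
    (star ((Matrix.posSemidef_conjTranspose_mul_self A).1.eigenvectorUnitary : Matrix ι ι ℂ))).trace.re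

/-- `P` acts only on the tensor factors in `S` (i.e. acts as the identity outside `S`):
entries vanish unless the row and column indices agree outside `S`, and entries do not
depend on the common value of the indices outside `S`. -/
def ActsOn {d n : ℕ} (S : Finset (Fin n)) (P : Matrix (Fin n → Fin d) (Fin n → Fin d) ℂ) :
    Prop :=
  (∀ x y : Fin n → Fin d, (∃ i ∉ S, x i ≠ y i) → P x y = 0) ∧
  (∀ x y z w : Fin n → Fin d,
    P (S.piecewise x z) (S.piecewise y z) = P (S.piecewise x w) (S.piecewise y w))

/-- An `r`-local unitary on `(ℂ^d)^{⊗n}`: a unitary acting as the identity on at least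
`n - r` tensor factors. -/
def IsLocalUnitary {d : ℕ} (n r : ℕ) (P : Matrix (Fin n → Fin d) (Fin n → Fin d) ℂ) :
    Prop :=
  P ∈ Matrix.unitaryGroup (Fin n → Fin d) ℂ ∧
  ∃ S : Finset (Fin n), S.card ≤ r ∧ ActsOn S P

/-- The quantum Hamming ball `Δ_r(φ)`: the span of all vectors `P φ` for `P` an `r`-local
unitary. -/
def hammingBall {d : ℕ} (n r : ℕ) (φ : (Fin n → Fin d) → ℂ) :
    Submodule ℂ ((Fin n → Fin d) → ℂ) :=
  Submodule.span ℂ {w | ∃ P, IsLocalUnitary n r P ∧ w = P.mulVec φ}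

/-- The quantum Hamming distance from `τ` to `φ` is at most `r`: the support (range) of `τ`
is contained in the quantum Hamming ball `Δ_r(φ)`. -/
def hammingDistLE {d n : ℕ} (τ : Matrix (Fin n → Fin d) (Fin n → Fin d) ℂ)
    (φ : (Fin n → Fin d) → ℂ) (r : ℕ) : Prop :=
  ∀ v, τ.mulVec v ∈ hammingBall n r φ

/-!
Let `A = ∫ |θ⟩⟨θ|^{⊗n} dθ`, indexed by words `x : Fin n → Fin d`. Invariance of the measure
under diagonal phase unitaries kills every entry `A x y` for which `x` and `y` have different
letter counts, and the remaining entries equal the moment `m x = ∫ |θ^x|²`. Invariance under all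
unitaries gives `∫ |⟨ψ|θ⟩|^{2n} dθ = λ ‖ψ‖^{2n}`; expanding both sides as polynomials in the
`|ψ_k|²` and comparing coefficients yields `N x * m x = λ`, where `N x` counts the words with the
letter counts of `x`. Since the moments sum to `1` and there are `c_{n,d}` letter counts,
`λ = 1 / c_{n,d}`, so `c_{n,d} • A` is the symmetrizer. Finally, two Hermitian matrices that map
everything into the symmetric subspace and fix it pointwise are equal.
-/

section Words

variable {α : Type*} {n : ℕ}

def typeOf (x : Fin n → α) : Multiset α := univ.val.map x

@[simp] lemma card_typeOf (x : Fin n → α) : Multiset.card (typeOf x) = n := by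
  simp [typeOf]

lemma typeOf_comp_perm (x : Fin n → α) (σ : Equiv.Perm (Fin n)) :
    typeOf (x ∘ σ) = typeOf x := by
  rw [typeOf, ← Multiset.map_map, Multiset.map_univ_val_equiv, typeOf]

lemma prod_comp_eq_prod_map_typeOf {M : Type*} [CommMonoid M] (f : α → M) (x : Fin n → α) :
    ∏ i, f (x i) = ((typeOf x).map f).prod := by
  rw [typeOf, Multiset.map_map]
  rfl

lemma exists_typeOf_eq {s : Multiset α} (hs : Multiset.card s = n) :
    ∃ x : Fin n → α, typeOf x = s := by
  subst hs
  refine ⟨fun i => s.toList.get (Fin.cast (by simp) i), ?_⟩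
  rw [typeOf, Fin.univ_val_map, ← List.ofFn_congr (by simp) s.toList.get, List.ofFn_get,
    Multiset.coe_toList]

variable [DecidableEq α]

lemma count_typeOf (x : Fin n → α) (a : α) : (typeOf x).count a = #{i | x i = a} := by
  rw [typeOf, Multiset.count_map, Finset.card_def, Finset.filter_val]
  exact congrArg _ (Multiset.filter_congr fun i _ => eq_comm)

lemma exists_perm_of_typeOf_eq {x y : Fin n → α} (h : typeOf x = typeOf y) :
    ∃ σ : Equiv.Perm (Fin n), y = x ∘ σ := by
  have hfiber (a : α) : {i // y i = a} ≃ {i // x i = a} := Fintype.equivOfCardEq <| by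
    simp only [Fintype.card_subtype, ← count_typeOf, h]
  refine ⟨(Equiv.sigmaFiberEquiv y).symm.trans
    ((Equiv.sigmaCongrRight hfiber).trans (Equiv.sigmaFiberEquiv x)), funext fun i => ?_⟩
  exact ((hfiber (y i)) ⟨i, rfl⟩).2.symm

lemma toFinsupp_typeOf (x : Fin n → α) :
    Multiset.toFinsupp (typeOf x) = ∑ i, Finsupp.single (x i) 1 := by
  ext a
  simp [count_typeOf, Finsupp.single_apply, Finset.sum_boole, eq_comm]

variable [Fintype α]

lemma card_image_typeOf :
    #(univ.image (typeOf : (Fin n → α) → Multiset α)) = (Fintype.card α + n - 1).choose n := by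
  rw [← Sym.card_sym_eq_choose, ← Finset.card_univ]
  symm
  refine Finset.card_bij (fun s _ => (s : Multiset α)) (fun s _ => ?_)
    (fun s _ t _ h => Sym.coe_injective h) (fun s hs => ?_)
  · obtain ⟨x, hx⟩ := exists_typeOf_eq s.2
    exact Finset.mem_image.2 ⟨x, Finset.mem_univ _, hx⟩
  · obtain ⟨x, -, rfl⟩ := Finset.mem_image.1 hs
    exact ⟨⟨typeOf x, card_typeOf x⟩, Finset.mem_univ _, rfl⟩

def typeCard (x : Fin n → α) : ℕ := #{y : Fin n → α | typeOf y = typeOf x}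

lemma typeCard_pos (x : Fin n → α) : 0 < typeCard x :=
  Finset.card_pos.2 ⟨x, Finset.mem_filter.2 ⟨Finset.mem_univ x, rfl⟩⟩

lemma typeCard_congr {x y : Fin n → α} (h : typeOf x = typeOf y) : typeCard x = typeCard y := by
  rw [typeCard, typeCard, h]

lemma sum_typeOf_eq {M : Type*} [AddCommMonoid M] {f : (Fin n → α) → M} (x : Fin n → α)
    (hf : ∀ y, typeOf y = typeOf x → f y = f x) :
    ∑ y with typeOf y = typeOf x, f y = typeCard x • f x := by
  rw [Finset.sum_congr rfl fun y hy => hf y (Finset.mem_filter.1 hy).2, Finset.sum_const, typeCard]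

lemma sum_inv_typeCard :
    ∑ x : Fin n → α, (typeCard x : ℝ)⁻¹ = (Fintype.card α + n - 1).choose n := by
  rw [← card_image_typeOf, Finset.card_eq_sum_ones, Nat.cast_sum, Nat.cast_one]
  refine (Finset.sum_image' _ fun x _ => ?_).symm
  rw [sum_typeOf_eq x fun y hy => by rw [typeCard_congr hy], nsmul_eq_mul,
    mul_inv_cancel₀ (Nat.cast_ne_zero.2 (typeCard_pos x).ne')]

end Words

section Polynomial

open MvPolynomial

variable {α : Type*} [Fintype α] [DecidableEq α] {n : ℕ}

lemma eq_zero_of_sum_mul_prod_eq_zero {c : (Fin n → α) → ℝ}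
    (hc : ∀ x y, typeOf x = typeOf y → c x = c y)
    (h : ∀ u : α → ℝ, (∀ k, 0 ≤ u k) → ∑ x, c x * ∏ i, u (x i) = 0) (x : Fin n → α) :
    c x = 0 := by
  have hmono (y : Fin n → α) :
      ∏ i, X (y i) = monomial (Multiset.toFinsupp (typeOf y)) (1 : ℝ) := by
    rw [toFinsupp_typeOf, monomial_sum_one]
    rfl
  set P : MvPolynomial α ℝ := ∑ y, C (c y) * ∏ i, X (y i)
  have hP : P = 0 := funext_set (fun _ => Set.Ici 0) (fun _ => Set.Ici_infinite 0) fun u hu => by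
    simpa [P] using h u fun k => hu k trivial
  have hcoeff := congrArg (coeff (Multiset.toFinsupp (typeOf x))) hP
  simp only [P, hmono, coeff_sum, coeff_C_mul, coeff_monomial, coeff_zero, mul_ite, mul_one,
    mul_zero, Multiset.toFinsupp.injective.eq_iff] at hcoeff
  rw [← Finset.sum_filter, sum_typeOf_eq x fun y hy => hc y x hy, nsmul_eq_mul] at hcoeff
  exact (mul_eq_zero.1 hcoeff).resolve_left (Nat.cast_ne_zero.2 (typeCard_pos x).ne')

end Polynomial

section Symmetrizer

variable (α : Type*) (n : ℕ)

def symmetricTensors : Set ((Fin n → α) → ℂ) :=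
  {v | ∀ σ : Equiv.Perm (Fin n), ∀ x, v (x ∘ σ) = v x}

variable [Fintype α] [DecidableEq α]

/-- The projector `(1/n!) ∑_σ P_σ` onto `symmetricTensors α n`, written entrywise. -/
def symmetrizer : Matrix (Fin n → α) (Fin n → α) ℂ :=
  of fun x y => if typeOf x = typeOf y then ((typeCard x : ℂ))⁻¹ else 0

variable {α n}

lemma symmetrizer_isHermitian : (symmetrizer α n).IsHermitian := by
  ext x y
  by_cases h : typeOf x = typeOf y
  · simp [symmetrizer, h, typeCard_congr h]
  · simp [symmetrizer, h, Ne.symm h]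

lemma symmetrizer_mulVec_mem (v : (Fin n → α) → ℂ) :
    symmetrizer α n *ᵥ v ∈ symmetricTensors α n :=
  fun σ x => by simp only [mulVec, dotProduct, symmetrizer, of_apply, typeOf_comp_perm,
    typeCard_congr (typeOf_comp_perm x σ)]

lemma symmetrizer_mulVec_of_mem {v : (Fin n → α) → ℂ} (hv : v ∈ symmetricTensors α n) :
    symmetrizer α n *ᵥ v = v := by
  ext x
  have hconst (y) (hy : typeOf y = typeOf x) : v y = v x := by
    obtain ⟨σ, rfl⟩ := exists_perm_of_typeOf_eq hy.symm
    exact hv σ x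
  simp only [mulVec, dotProduct, symmetrizer, of_apply, ite_mul, zero_mul]
  rw [← Finset.sum_filter]
  simp_rw [eq_comm (a := typeOf x)]
  rw [sum_typeOf_eq x fun y hy => by rw [hconst y hy], nsmul_eq_mul, ← mul_assoc,
    mul_inv_cancel₀ (Nat.cast_ne_zero.2 (typeCard_pos x).ne'), one_mul]

end Symmetrizer

lemma _root_.Matrix.mul_eq_right_of_mulVec_mem {ι R : Type*} [Fintype ι] [DecidableEq ι]
    [CommSemiring R] {P Q : Matrix ι ι R} {V : Set (ι → R)} (hQ : ∀ v, Q *ᵥ v ∈ V)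
    (hP : ∀ v ∈ V, P *ᵥ v = v) : P * Q = Q := by
  ext x y
  have := congrFun (hP _ (hQ (Pi.single y 1))) x
  rwa [mulVec_mulVec, mulVec_single_one, mulVec_single_one] at this

lemma _root_.Matrix.IsHermitian.eq_of_mul_eq {ι R : Type*} [Fintype ι] [CommSemiring R]
    [StarRing R] {P Q : Matrix ι ι R} (hP : P.IsHermitian) (hQ : Q.IsHermitian) (hPQ : P * Q = Q)
    (hQP : Q * P = P) : P = Q := by
  rw [← hQP, ← hP.eq, ← hQ.eq, ← conjTranspose_mul, hPQ, hQ.eq]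

section Sphere

variable {d : ℕ}

lemma overlap_eq_normSq_dotProduct (θ ψ : Fin d → ℂ) :
    overlap θ ψ = Complex.normSq (star θ ⬝ᵥ ψ) := rfl

lemma overlap_mulVec_unitary {U : Matrix (Fin d) (Fin d) ℂ} (hU : U ∈ unitaryGroup (Fin d) ℂ)
    (θ ψ : Fin d → ℂ) : overlap (U *ᵥ θ) (U *ᵥ ψ) = overlap θ ψ := by
  rw [overlap_eq_normSq_dotProduct, overlap_eq_normSq_dotProduct, star_mulVec,
    ← dotProduct_mulVec, mulVec_mulVec, ← star_eq_conjTranspose, mem_unitaryGroup_iff'.1 hU,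
    one_mulVec]

lemma overlap_smul_left (c : ℂ) (θ ψ : Fin d → ℂ) :
    overlap (c • θ) ψ = Complex.normSq c * overlap θ ψ := by
  rw [overlap_eq_normSq_dotProduct, overlap_eq_normSq_dotProduct, star_smul, smul_dotProduct,
    smul_eq_mul, map_mul, Complex.star_def, Complex.normSq_conj]

lemma overlap_single_left (i : Fin d) (ψ : Fin d → ℂ) :
    overlap (Pi.single i 1) ψ = Complex.normSq (ψ i) := by
  rw [overlap_eq_normSq_dotProduct, ← Pi.single_star, star_one, single_one_dotProduct]

lemma IsUnitVec.normSq_le_one {θ : Fin d → ℂ} (hθ : IsUnitVec θ) (k : Fin d) :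
    Complex.normSq (θ k) ≤ 1 :=
  hθ ▸ Finset.single_le_sum (fun i _ => Complex.normSq_nonneg (θ i)) (Finset.mem_univ k)

lemma exists_unitary_mulVec_single_eq (i : Fin d) {φ : Fin d → ℂ} (hφ : IsUnitVec φ) :
    ∃ U ∈ unitaryGroup (Fin d) ℂ, U *ᵥ Pi.single i 1 = φ := by
  have hnorm : ‖WithLp.toLp 2 φ‖ = 1 := by
    rw [EuclideanSpace.norm_eq, ← Real.sqrt_one, ← hφ]
    simp [Complex.normSq_eq_norm_sq]
  have hon : Orthonormal ℂ (({i} : Set (Fin d)).domRestrict fun _ => WithLp.toLp 2 φ) :=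
    ⟨fun _ => hnorm, fun j k hjk => absurd (Subsingleton.elim j k) hjk⟩
  obtain ⟨b, hb⟩ := hon.exists_orthonormalBasis_extension_of_card_eq (by simp)
  refine ⟨(EuclideanSpace.basisFun (Fin d) ℂ).toBasis.toMatrix b,
    OrthonormalBasis.toMatrix_orthonormalBasis_mem_unitary _ _, funext fun j => ?_⟩
  rw [mulVec_single_one, col_apply, Module.Basis.toMatrix_apply,
    OrthonormalBasis.coe_toBasis_repr_apply, EuclideanSpace.basisFun_repr, hb i rfl]

lemma exists_unitary_mulVec_smul_single_eq (i : Fin d) (ψ : Fin d → ℂ) :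
    ∃ U ∈ unitaryGroup (Fin d) ℂ,
      U *ᵥ ((√(∑ k, Complex.normSq (ψ k)) : ℂ) • Pi.single i 1) = ψ := by
  have hS : 0 ≤ ∑ k, Complex.normSq (ψ k) := Finset.sum_nonneg fun k _ => Complex.normSq_nonneg _
  set r := √(∑ k, Complex.normSq (ψ k))
  by_cases hr : r = 0
  · refine ⟨1, one_mem _, ?_⟩
    have hψ : ψ = 0 := funext fun k => Complex.normSq_eq_zero.1 <|
      (Finset.sum_eq_zero_iff_of_nonneg fun k _ => Complex.normSq_nonneg _).1
        ((Real.sqrt_eq_zero'.1 hr).antisymm hS) k (Finset.mem_univ k)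
    simp [hr, hψ]
  · have hφ : IsUnitVec ((r⁻¹ : ℂ) • ψ) := by
      simp only [IsUnitVec, Pi.smul_apply, smul_eq_mul, map_mul, Complex.normSq_inv,
        Complex.normSq_ofReal, ← Finset.mul_sum]
      rw [Real.mul_self_sqrt hS]
      exact inv_mul_cancel₀ (Real.sqrt_ne_zero'.1 hr).ne'
    obtain ⟨U, hU, hUφ⟩ := exists_unitary_mulVec_single_eq i hφ
    exact ⟨U, hU, by rw [mulVec_smul, hUφ, smul_inv_smul₀ (by exact_mod_cast hr)]⟩

namespace IsHaarOnSphere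

variable {μ : Measure (Fin d → ℂ)}

lemma ae_isUnitVec (hμ : IsHaarOnSphere μ) : ∀ᵐ θ ∂μ, IsUnitVec θ := by
  have : IsProbabilityMeasure μ := hμ.1
  have hmeas : MeasurableSet {ψ : Fin d → ℂ | IsUnitVec ψ} :=
    (isClosed_eq (by fun_prop) continuous_const).measurableSet
  exact mem_ae_iff.2 <| by
    rw [measure_compl hmeas (measure_ne_top μ _), hμ.2.1, measure_univ, tsub_self]

lemma integrable (hμ : IsHaarOnSphere μ) {E : Type*} [NormedAddCommGroup E]
    {f : (Fin d → ℂ) → E} (hf : Continuous f) {C : ℝ} (hC : ∀ θ, IsUnitVec θ → ‖f θ‖ ≤ C) :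
    Integrable f μ :=
  have : IsProbabilityMeasure μ := hμ.1
  .of_bound hf.aestronglyMeasurable C (hμ.ae_isUnitVec.mono hC)

lemma integral_comp_mulVec (hμ : IsHaarOnSphere μ) {E : Type*} [NormedAddCommGroup E]
    [NormedSpace ℝ E] {U : Matrix (Fin d) (Fin d) ℂ} (hU : U ∈ unitaryGroup (Fin d) ℂ)
    {f : (Fin d → ℂ) → E} (hf : Continuous f) : ∫ θ, f (U *ᵥ θ) ∂μ = ∫ θ, f θ ∂μ := by
  have hUμ := hμ.2.2 U hU
  rw [← integral_map (Continuous.aemeasurable (by fun_prop)) (hUμ ▸ hf.aestronglyMeasurable),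
    hUμ]

lemma integral_overlap_pow (hμ : IsHaarOnSphere μ) (i : Fin d) (n : ℕ) (ψ : Fin d → ℂ) :
    ∫ θ, overlap ψ θ ^ n ∂μ =
      (∑ k, Complex.normSq (ψ k)) ^ n * ∫ θ, Complex.normSq (θ i) ^ n ∂μ := by
  obtain ⟨U, hU, hUψ⟩ := exists_unitary_mulVec_smul_single_eq i ψ
  conv_lhs => rw [← hUψ]
  rw [← hμ.integral_comp_mulVec hU (by unfold overlap; fun_prop)]
  have hS : 0 ≤ ∑ k, Complex.normSq (ψ k) := Finset.sum_nonneg fun k _ => Complex.normSq_nonneg _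
  simp_rw [overlap_mulVec_unitary hU, overlap_smul_left, overlap_single_left,
    Complex.normSq_ofReal, Real.mul_self_sqrt hS, mul_pow]
  exact integral_const_mul (L := ℝ) _ _

end IsHaarOnSphere

end Sphere

section TensorPower

variable {d n : ℕ}

lemma tpow_eq_of_typeOf_eq (θ : Fin d → ℂ) {x y : Fin n → Fin d} (h : typeOf x = typeOf y) :
    tpow θ n x = tpow θ n y := by
  rw [tpow, tpow, prod_comp_eq_prod_map_typeOf, prod_comp_eq_prod_map_typeOf, h]

lemma normSq_tpow (θ : Fin d → ℂ) (x : Fin n → Fin d) :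
    Complex.normSq (tpow θ n x) = ∏ i, Complex.normSq (θ (x i)) :=
  map_prod Complex.normSq _ _

lemma tpow_diagonal_mulVec (u θ : Fin d → ℂ) (x : Fin n → Fin d) :
    tpow (diagonal u *ᵥ θ) n x = tpow u n x * tpow θ n x := by
  simp only [tpow, mulVec_diagonal, Finset.prod_mul_distrib]

lemma tpow_ite_eq_pow_count (k : Fin d) (ω : ℂ) (x : Fin n → Fin d) :
    tpow (fun j => if j = k then ω else 1) n x = ω ^ (typeOf x).count k := by
  rw [tpow, Finset.prod_ite, Finset.prod_const, Finset.prod_const_one, mul_one, count_typeOf]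

lemma IsUnitVec.norm_tpow_le_one {θ : Fin d → ℂ} (hθ : IsUnitVec θ) (x : Fin n → Fin d) :
    ‖tpow θ n x‖ ≤ 1 := by
  rw [← sq_le_one_iff₀ (norm_nonneg _), ← Complex.normSq_eq_norm_sq, normSq_tpow]
  exact Finset.prod_le_one (fun i _ => Complex.normSq_nonneg _) fun i _ => hθ.normSq_le_one (x i)

lemma dotProduct_pow (ψ θ : Fin d → ℂ) :
    (star ψ ⬝ᵥ θ) ^ n = star (tpow ψ n) ⬝ᵥ tpow θ n := by
  simp only [dotProduct, Fintype.sum_pow, tpow, Pi.star_apply, star_prod, Finset.prod_mul_distrib]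

lemma overlap_pow (ψ θ : Fin d → ℂ) :
    (overlap ψ θ ^ n : ℂ) = star (tpow ψ n) ⬝ᵥ (tpowProj θ n *ᵥ tpow ψ n) := by
  rw [overlap_eq_normSq_dotProduct, ← Complex.ofReal_pow, ← map_pow, ← Complex.mul_conj,
    dotProduct_pow]
  simp only [dotProduct, mulVec, tpowProj, of_apply, map_sum, map_mul, Finset.sum_mul,
    Finset.mul_sum, Pi.star_apply, Complex.star_def, Complex.conj_conj]
  rw [Finset.sum_comm]
  exact Finset.sum_congr rfl fun x _ => Finset.sum_congr rfl fun y _ => by ring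

lemma exists_tpow_mul_conj_tpow_ne_one {x y : Fin n → Fin d} (hxy : typeOf x ≠ typeOf y) :
    ∃ u : Fin d → ℂ, (∀ j, ‖u j‖ = 1) ∧ tpow u n x * conj (tpow u n y) ≠ 1 := by
  obtain ⟨k, hk⟩ : ∃ k, (typeOf x).count k ≠ (typeOf y).count k := by
    by_contra! h
    exact hxy (Multiset.ext.2 h)
  have hcount (z : Fin n → Fin d) : (typeOf z).count k < n + 1 :=
    Nat.lt_succ_of_le ((Multiset.count_le_card _ _).trans (card_typeOf z).le)
  obtain ⟨ω, hω⟩ : ∃ ω : ℂ, IsPrimitiveRoot ω (n + 1) :=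
    ⟨_, Complex.isPrimitiveRoot_exp (n + 1) n.succ_ne_zero⟩
  have hω1 := hω.norm'_eq_one n.succ_ne_zero
  refine ⟨fun j => if j = k then ω else 1, fun j => by by_cases hj : j = k <;> simp [hj, hω1], ?_⟩
  rw [tpow_ite_eq_pow_count, tpow_ite_eq_pow_count, map_pow, ← Complex.inv_eq_conj hω1, inv_pow,
    Ne, mul_inv_eq_one₀ (pow_ne_zero _ (hω.ne_zero n.succ_ne_zero))]
  exact fun h => hk (hω.pow_inj (hcount x) (hcount y) h)

end TensorPower

lemma integral_dotProduct_mulVec {d : ℕ} {ι : Type*} [Fintype ι] {μ : Measure (Fin d → ℂ)}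
    {f : (Fin d → ℂ) → Matrix ι ι ℂ} (hf : ∀ x y, Integrable (fun θ => f θ x y) μ) (v : ι → ℂ) :
    ∫ θ, star v ⬝ᵥ (f θ *ᵥ v) ∂μ = star v ⬝ᵥ (matIntegral μ f *ᵥ v) := by
  simp only [dotProduct, mulVec, Finset.mul_sum]
  rw [integral_finsetSum _ fun x _ => integrable_finsetSum _ fun y _ =>
    ((hf x y).mul_const _).const_mul _]
  refine Finset.sum_congr rfl fun x _ => ?_
  rw [integral_finsetSum _ fun y _ => ((hf x y).mul_const _).const_mul _]
  refine Finset.sum_congr rfl fun y _ => ?_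
  rw [integral_const_mul, integral_mul_const]
  rfl

section Moments

variable {d n : ℕ} {μ : Measure (Fin d → ℂ)}

def tpowMoment (μ : Measure (Fin d → ℂ)) (n : ℕ) (x : Fin n → Fin d) : ℝ :=
  ∫ θ, Complex.normSq (tpow θ n x) ∂μ

lemma IsHaarOnSphere.integrable_tpowProj_apply (hμ : IsHaarOnSphere μ) (x y : Fin n → Fin d) :
    Integrable (fun θ => tpowProj θ n x y) μ :=
  hμ.integrable (C := 1) (by unfold tpowProj tpow; fun_prop) fun θ hθ => by
    rw [tpowProj, of_apply, norm_mul, Complex.norm_conj]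
    exact mul_le_one₀ (hθ.norm_tpow_le_one x) (norm_nonneg _) (hθ.norm_tpow_le_one y)

lemma IsHaarOnSphere.matIntegral_tpowProj_apply_eq_mul (hμ : IsHaarOnSphere μ) {u : Fin d → ℂ}
    (hu : ∀ j, ‖u j‖ = 1) (x y : Fin n → Fin d) :
    matIntegral μ (tpowProj · n) x y =
      tpow u n x * conj (tpow u n y) * matIntegral μ (tpowProj · n) x y := by
  have hD : diagonal u ∈ unitaryGroup (Fin d) ℂ := by
    rw [mem_unitaryGroup_iff, star_eq_conjTranspose, diagonal_conjTranspose,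
      diagonal_mul_diagonal, ← diagonal_one]
    congr 1
    ext j
    rw [Pi.star_apply, Complex.star_def, Complex.mul_conj, Complex.normSq_eq_norm_sq, hu,
      one_pow, Complex.ofReal_one]
  calc matIntegral μ (tpowProj · n) x y = ∫ θ, tpowProj (diagonal u *ᵥ θ) n x y ∂μ :=
        (hμ.integral_comp_mulVec hD (by unfold tpowProj tpow; fun_prop)).symm
    _ = ∫ θ, tpow u n x * conj (tpow u n y) * tpowProj θ n x y ∂μ :=
        integral_congr_ae <| .of_forall fun θ => by
          simp only [tpowProj, of_apply, tpow_diagonal_mulVec, map_mul]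
          ring
    _ = _ := integral_const_mul _ _

lemma IsHaarOnSphere.matIntegral_tpowProj_apply (hμ : IsHaarOnSphere μ) (x y : Fin n → Fin d) :
    matIntegral μ (tpowProj · n) x y =
      if typeOf x = typeOf y then (tpowMoment μ n x : ℂ) else 0 := by
  split_ifs with h
  · refine (integral_congr_ae <| .of_forall fun θ => ?_).trans integral_ofReal
    simp only [tpowProj, of_apply]
    rw [← tpow_eq_of_typeOf_eq θ h, Complex.mul_conj]
    rfl
  · obtain ⟨u, hu, hne⟩ := exists_tpow_mul_conj_tpow_ne_one h
    have hinv := hμ.matIntegral_tpowProj_apply_eq_mul hu x y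
    have : (1 - tpow u n x * conj (tpow u n y)) * matIntegral μ (tpowProj · n) x y = 0 := by
      linear_combination hinv
    exact (mul_eq_zero.1 this).resolve_left (sub_ne_zero.2 (Ne.symm hne))

lemma tpowMoment_congr {x y : Fin n → Fin d} (h : typeOf x = typeOf y) :
    tpowMoment μ n x = tpowMoment μ n y := by
  simp only [tpowMoment, tpow_eq_of_typeOf_eq _ h]

lemma IsHaarOnSphere.sum_tpowMoment (hμ : IsHaarOnSphere μ) :
    ∑ x : Fin n → Fin d, tpowMoment μ n x = 1 := by
  have : IsProbabilityMeasure μ := hμ.1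
  have hint (x : Fin n → Fin d) : Integrable (fun θ => Complex.normSq (tpow θ n x)) μ :=
    hμ.integrable (C := 1) (by unfold tpow; fun_prop) fun θ hθ => by
      rw [Real.norm_of_nonneg (Complex.normSq_nonneg _), Complex.normSq_eq_norm_sq]
      exact pow_le_one₀ (norm_nonneg _) (hθ.norm_tpow_le_one x)
  simp only [tpowMoment]
  rw [← integral_finsetSum _ fun x _ => hint x]
  calc ∫ θ, ∑ x, Complex.normSq (tpow θ n x) ∂μ = ∫ _, (1 : ℝ) ∂μ :=
        integral_congr_ae <| hμ.ae_isUnitVec.mono fun θ (hθ : ∑ k, Complex.normSq (θ k) = 1) => by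
          simp only [normSq_tpow]
          rw [← Fintype.sum_pow (fun k => Complex.normSq (θ k)), hθ, one_pow]
    _ = 1 := by simp

lemma IsHaarOnSphere.integral_overlap_pow_eq_sum (hμ : IsHaarOnSphere μ) (ψ : Fin d → ℂ) :
    ∫ θ, overlap ψ θ ^ n ∂μ =
      ∑ x, typeCard x * tpowMoment μ n x * Complex.normSq (tpow ψ n x) := by
  have hrow (x : Fin n → Fin d) :
      ∑ y, matIntegral μ (tpowProj · n) x y * tpow ψ n y =
        typeCard x * tpowMoment μ n x * tpow ψ n x := by
    simp only [hμ.matIntegral_tpowProj_apply, ite_mul, zero_mul]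
    rw [← Finset.sum_filter]
    simp_rw [eq_comm (a := typeOf x)]
    rw [sum_typeOf_eq x fun y hy => by rw [tpow_eq_of_typeOf_eq ψ hy], nsmul_eq_mul]
    ring
  apply Complex.ofReal_injective
  rw [← integral_complex_ofReal]
  simp_rw [Complex.ofReal_pow, overlap_pow]
  rw [integral_dotProduct_mulVec hμ.integrable_tpowProj_apply]
  simp only [dotProduct, mulVec, hrow, Pi.star_apply, Complex.star_def]
  push_cast
  refine Finset.sum_congr rfl fun x _ => ?_
  rw [← Complex.mul_conj]
  ring

lemma IsHaarOnSphere.typeCard_mul_tpowMoment (hμ : IsHaarOnSphere μ) (i : Fin d)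
    (x : Fin n → Fin d) :
    typeCard x * tpowMoment μ n x = ∫ θ, Complex.normSq (θ i) ^ n ∂μ := by
  refine sub_eq_zero.1 <| eq_zero_of_sum_mul_prod_eq_zero
    (c := fun x => typeCard x * tpowMoment μ n x - ∫ θ, Complex.normSq (θ i) ^ n ∂μ)
    (fun x y h => by simp only [typeCard_congr h, tpowMoment_congr h]) (fun u hu => ?_) x
  set ψ : Fin d → ℂ := fun k => (√(u k) : ℂ)
  have hψ (k : Fin d) : Complex.normSq (ψ k) = u k := by
    simp [ψ, Complex.normSq_ofReal, Real.mul_self_sqrt (hu k)]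
  have h := hμ.integral_overlap_pow i n ψ
  rw [hμ.integral_overlap_pow_eq_sum, Fintype.sum_pow] at h
  simp only [normSq_tpow, hψ] at h
  simp only [sub_mul, Finset.sum_sub_distrib, h, Finset.sum_mul]
  exact sub_eq_zero.2 (Finset.sum_congr rfl fun _ _ => mul_comm _ _)

lemma IsHaarOnSphere.choose_mul_tpowMoment (hμ : IsHaarOnSphere μ) (i : Fin d)
    (x : Fin n → Fin d) :
    (n + d - 1).choose n * tpowMoment μ n x = (typeCard x : ℝ)⁻¹ := by
  have hm (y : Fin n → Fin d) :
      tpowMoment μ n y = (typeCard y : ℝ)⁻¹ * ∫ θ, Complex.normSq (θ i) ^ n ∂μ := by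
    rw [← hμ.typeCard_mul_tpowMoment i y,
      inv_mul_cancel_left₀ (Nat.cast_ne_zero.2 (typeCard_pos y).ne')]
  have hchoose : (n + d - 1).choose n * ∫ θ, Complex.normSq (θ i) ^ n ∂μ = 1 := by
    rw [← hμ.sum_tpowMoment, Finset.sum_congr rfl fun y _ => hm y, ← Finset.sum_mul,
      sum_inv_typeCard, Fintype.card_fin, Nat.add_comm d n]
  rw [hm x, mul_left_comm, hchoose, mul_one]

lemma IsHaarOnSphere.choose_smul_matIntegral_tpowProj (hμ : IsHaarOnSphere μ) (i : Fin d) :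
    ((n + d - 1).choose n : ℂ) • matIntegral μ (tpowProj · n) = symmetrizer (Fin d) n := by
  ext x y
  rw [Matrix.smul_apply, hμ.matIntegral_tpowProj_apply, symmetrizer, of_apply]
  split_ifs
  · rw [smul_eq_mul, ← Complex.ofReal_natCast, ← Complex.ofReal_mul,
      hμ.choose_mul_tpowMoment i x]
    push_cast
    rfl
  · exact smul_zero _

end Moments

theorem symmetric_projector_eq_integral_general (d n : ℕ) (hd : 1 ≤ d)
    (μ : Measure (Fin d → ℂ)) (hμ : IsHaarOnSphere μ)
    (Psym : Matrix (Fin n → Fin d) (Fin n → Fin d) ℂ)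
    (hherm : Psym.IsHermitian)
    (hrange : ∀ (v : (Fin n → Fin d) → ℂ) (σ : Equiv.Perm (Fin n)) (x : Fin n → Fin d),
      Psym.mulVec v (x ∘ σ) = Psym.mulVec v x)
    (hfix : ∀ v : (Fin n → Fin d) → ℂ,
      (∀ (σ : Equiv.Perm (Fin n)) (x : Fin n → Fin d), v (x ∘ σ) = v x) →
      Psym.mulVec v = v) :
    Psym = ((n + d - 1).choose n : ℂ) • matIntegral μ (fun θ => tpowProj θ n) := by
  rw [hμ.choose_smul_matIntegral_tpowProj ⟨0, hd⟩]
  exact hherm.eq_of_mul_eq symmetrizer_isHermitian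
    (mul_eq_right_of_mulVec_mem symmetrizer_mulVec_mem hfix)
    (mul_eq_right_of_mulVec_mem (V := symmetricTensors (Fin d) n) (fun v => hrange v)
      fun _ => symmetrizer_mulVec_of_mem)

/-- The projector onto the symmetric subspace of `(ℂ^d)^{⊗n}` equals
`c_{n,d} ∫ |θ⟩⟨θ|^{⊗n} dθ`, where `c_{n,d} = C(n+d−1, n)` and the integral is with
respect to the Haar probability measure on the unit sphere of `ℂ^d`. -/
theorem symmetric_projector_eq_integral (d n : ℕ) (hd : 1 ≤ d) (hn : 1 ≤ n)
    (μ : Measure (Fin d → ℂ)) (hμ : IsHaarOnSphere μ)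
    (Psym : Matrix (Fin n → Fin d) (Fin n → Fin d) ℂ)
    (hherm : Psym.IsHermitian) (hidem : Psym * Psym = Psym)
    (hrange : ∀ (v : (Fin n → Fin d) → ℂ) (σ : Equiv.Perm (Fin n)) (x : Fin n → Fin d),
      Psym.mulVec v (x ∘ σ) = Psym.mulVec v x)
    (hfix : ∀ v : (Fin n → Fin d) → ℂ,
      (∀ (σ : Equiv.Perm (Fin n)) (x : Fin n → Fin d), v (x ∘ σ) = v x) →
      Psym.mulVec v = v) :
    Psym = ((n + d - 1).choose n : ℂ) • matIntegral μ (fun θ => tpowProj θ n) :=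
  symmetric_projector_eq_integral_general d n hd μ hμ Psym hherm hrange hfix

end DeFinetti
end
end

section
/- Let n ≥ 1 and r ∈ {1,…,n} be integers, and let x ∈ [0,1] satisfy x ≥ 1 − r/(3n). Then Σ_{i ≥ r} binomial(n, i) · x^{n−i} · (1−x)^{i} ≤ exp(−r/3). -/
/-!
With `p = 1 - x`, the tail is the probability that a `Binomial(n, p)` variable `X` reaches `r`,
so Markov's inequality for `3 ^ X` bounds it by `(x + 3p)ⁿ / 3ʳ = (1 + 2p)ⁿ / 3ʳ`.
Since `1 + 2p ≤ exp (2p)`, `np ≤ r / 3` and `3 ≥ e`, this is at most `exp (2r/3 - r) = exp (-r/3)`.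
-/

open Finset Real

/-- Markov's inequality for `t ^ X`, where `X ~ Binomial(n, b)` when `a + b = 1`. -/
theorem sum_Icc_choose_mul_pow_le {a b t : ℝ} (ha : 0 ≤ a) (hb : 0 ≤ b) (ht : 1 ≤ t) (r n : ℕ) :
    ∑ i ∈ Icc r n, (n.choose i : ℝ) * a ^ (n - i) * b ^ i ≤ (a + t * b) ^ n / t ^ r := by
  have htr : 0 < t ^ r := by positivity
  calc ∑ i ∈ Icc r n, (n.choose i : ℝ) * a ^ (n - i) * b ^ i
      ≤ ∑ i ∈ Icc r n, (n.choose i : ℝ) * a ^ (n - i) * (t * b) ^ i / t ^ r := by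
        refine sum_le_sum fun i hi => ?_
        rw [le_div_iff₀ htr, mul_pow, mul_comm (t ^ i), ← mul_assoc]
        gcongr
        exact (mem_Icc.mp hi).1
    _ ≤ ∑ i ∈ range (n + 1), (n.choose i : ℝ) * a ^ (n - i) * (t * b) ^ i / t ^ r := by
        refine sum_le_sum_of_subset_of_nonneg (fun i hi => ?_) fun i _ _ => by positivity
        exact mem_range.mpr (Nat.lt_succ_of_le (mem_Icc.mp hi).2)
    _ = (a + t * b) ^ n / t ^ r := by
        rw [add_comm a, add_pow, sum_div]
        exact sum_congr rfl fun i _ => by ring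

theorem one_add_pow_le_exp_mul {y : ℝ} (hy : -1 ≤ y) (n : ℕ) : (1 + y) ^ n ≤ exp (n * y) := by
  rw [exp_nat_mul]
  exact pow_le_pow_left₀ (by linarith) (by linarith [add_one_le_exp y]) n

theorem exp_natCast_le_three_pow (r : ℕ) : exp r ≤ 3 ^ r := by
  rw [← exp_one_pow]
  exact pow_le_pow_left₀ (exp_pos 1).le exp_one_lt_three.le r

theorem binomial_tail_le_general (n r : ℕ)
    (x : ℝ) (hx0 : 0 ≤ x) (hx1 : x ≤ 1) (hx : 1 - (r : ℝ) / (3 * n) ≤ x) :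
    ∑ i ∈ Finset.Icc r n, (n.choose i : ℝ) * x ^ (n - i) * (1 - x) ^ i ≤
      Real.exp (-(r : ℝ) / 3) := by
  set p := 1 - x
  have hp0 : 0 ≤ p := by linarith
  have hnp : n * p ≤ r / 3 :=
    calc (n : ℝ) * p ≤ n * (r / (3 * n)) := by gcongr; linarith
      _ = r / 3 * (n / n) := by ring
      _ ≤ r / 3 := mul_le_of_le_one_right (by positivity) (div_self_le_one _)
  calc ∑ i ∈ Icc r n, (n.choose i : ℝ) * x ^ (n - i) * p ^ i
      ≤ (x + 3 * p) ^ n / 3 ^ r := sum_Icc_choose_mul_pow_le hx0 hp0 (by norm_num) r n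
    _ = (1 + 2 * p) ^ n / 3 ^ r := by ring
    _ ≤ exp (n * (2 * p)) / exp r := by
        gcongr
        · exact one_add_pow_le_exp_mul (by linarith) n
        · exact exp_natCast_le_three_pow r
    _ = exp (2 * (n * p) - r) := by rw [← exp_sub]; ring_nf
    _ ≤ exp (-r / 3) := exp_le_exp.mpr (by linarith)

/-- Let `n ≥ 1` and `r ∈ {1,…,n}` be integers, and let `x ∈ [0,1]` satisfy
`x ≥ 1 − r/(3n)`. Then `Σ_{i ≥ r} C(n,i) xⁿ⁻ⁱ (1−x)ⁱ ≤ exp(−r/3)`. -/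
theorem binomial_tail_le (n r : ℕ) (hn : 1 ≤ n) (hr : 1 ≤ r) (hrn : r ≤ n)
    (x : ℝ) (hx0 : 0 ≤ x) (hx1 : x ≤ 1) (hx : 1 - (r : ℝ) / (3 * n) ≤ x) :
    ∑ i ∈ Finset.Icc r n, (n.choose i : ℝ) * x ^ (n - i) * (1 - x) ^ i ≤
      Real.exp (-(r : ℝ) / 3) :=
  binomial_tail_le_general n r x hx0 hx1 hx
end

section
/- Let n, k ≥ 1 and r ∈ {1,…,n} be integers. Then for all x ∈ [0,1], x^{k} · Σ_{i ≥ r} binomial(n, i) · x^{n−i} · (1−x)^{i} ≤ exp(−(r/3) · min{k/n, 1}). -/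
/-!
Write `p = 1 - x`. If `n p ≤ r / 3`, the Chernoff bound with parameter `1` gives
`Σ_{i ≥ r} C(n,i) xⁿ⁻ⁱ pⁱ ≤ e⁻ʳ (x + e p)ⁿ ≤ exp (-r + (e - 1) n p) ≤ exp (-r / 3)`,
as `e - 1 ≤ 2`. Otherwise `p > r / (3n)`, so `xᵏ ≤ exp (-k p) ≤ exp (-r k / (3n))`,
while the tail is at most `1`.
-/

open Finset

namespace BinomialTail

theorem sum_Icc_choose_mul_pow_le_add_pow (n r : ℕ) {x p : ℝ} (hx : 0 ≤ x) (hp : 0 ≤ p) :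
    ∑ i ∈ Icc r n, (n.choose i : ℝ) * x ^ (n - i) * p ^ i ≤ (p + x) ^ n := by
  rw [add_pow]
  calc ∑ i ∈ Icc r n, (n.choose i : ℝ) * x ^ (n - i) * p ^ i
      = ∑ i ∈ Icc r n, p ^ i * x ^ (n - i) * n.choose i := sum_congr rfl fun i _ => by ring
    _ ≤ ∑ i ∈ range (n + 1), p ^ i * x ^ (n - i) * n.choose i :=
        sum_le_sum_of_subset_of_nonneg
          (fun i hi => mem_range.2 (Nat.lt_succ_of_le (mem_Icc.1 hi).2))
          fun i _ _ => by positivity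

theorem sum_Icc_choose_mul_pow_le_one (n r : ℕ) {x : ℝ} (hx0 : 0 ≤ x) (hx1 : x ≤ 1) :
    ∑ i ∈ Icc r n, (n.choose i : ℝ) * x ^ (n - i) * (1 - x) ^ i ≤ 1 := by
  simpa using sum_Icc_choose_mul_pow_le_add_pow n r hx0 (sub_nonneg.2 hx1)

theorem sum_Icc_choose_mul_pow_le_exp_mul_pow (n r : ℕ) {x p t : ℝ} (hx : 0 ≤ x) (hp : 0 ≤ p)
    (ht : 0 ≤ t) :
    ∑ i ∈ Icc r n, (n.choose i : ℝ) * x ^ (n - i) * p ^ i ≤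
      Real.exp (-(t * r)) * (Real.exp t * p + x) ^ n := by
  have hterm : ∀ i ∈ Icc r n, (n.choose i : ℝ) * x ^ (n - i) * p ^ i ≤
      Real.exp (-(t * r)) * ((n.choose i : ℝ) * x ^ (n - i) * (Real.exp t * p) ^ i) := by
    intro i hi
    have hri : (r : ℝ) ≤ i := by exact_mod_cast (mem_Icc.1 hi).1
    have hexp : 1 ≤ Real.exp (-(t * r)) * Real.exp t ^ i := by
      rw [← Real.exp_nat_mul, ← Real.exp_add]
      exact Real.one_le_exp (by nlinarith)
    calc (n.choose i : ℝ) * x ^ (n - i) * p ^ i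
        ≤ (Real.exp (-(t * r)) * Real.exp t ^ i) * ((n.choose i : ℝ) * x ^ (n - i) * p ^ i) :=
          le_mul_of_one_le_left (by positivity) hexp
      _ = _ := by ring
  calc ∑ i ∈ Icc r n, (n.choose i : ℝ) * x ^ (n - i) * p ^ i
      ≤ Real.exp (-(t * r)) *
          ∑ i ∈ Icc r n, (n.choose i : ℝ) * x ^ (n - i) * (Real.exp t * p) ^ i := by
        rw [mul_sum]
        exact sum_le_sum hterm
    _ ≤ Real.exp (-(t * r)) * (Real.exp t * p + x) ^ n := by
        gcongr
        exact sum_Icc_choose_mul_pow_le_add_pow n r hx (by positivity)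

theorem sum_Icc_choose_mul_pow_le_exp_neg_div_three {n r : ℕ} {x : ℝ} (hx0 : 0 ≤ x)
    (hx1 : x ≤ 1) (h : n * (1 - x) ≤ r / 3) :
    ∑ i ∈ Icc r n, (n.choose i : ℝ) * x ^ (n - i) * (1 - x) ^ i ≤ Real.exp (-(r / 3)) := by
  have hbase : Real.exp 1 * (1 - x) + x ≤ Real.exp ((Real.exp 1 - 1) * (1 - x)) := by
    linarith [Real.add_one_le_exp ((Real.exp 1 - 1) * (1 - x))]
  have he : Real.exp 1 ≤ 3 := by linarith [Real.exp_one_lt_d9]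
  calc ∑ i ∈ Icc r n, (n.choose i : ℝ) * x ^ (n - i) * (1 - x) ^ i
      ≤ Real.exp (-(1 * r)) * (Real.exp 1 * (1 - x) + x) ^ n :=
        sum_Icc_choose_mul_pow_le_exp_mul_pow n r hx0 (sub_nonneg.2 hx1) zero_le_one
    _ ≤ Real.exp (-(1 * r)) * Real.exp ((Real.exp 1 - 1) * (1 - x)) ^ n := by gcongr
    _ = Real.exp (-r + (Real.exp 1 - 1) * (n * (1 - x))) := by
        rw [← Real.exp_nat_mul, ← Real.exp_add]
        ring_nf
    _ ≤ Real.exp (-(r / 3)) := by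
        gcongr
        nlinarith [Real.add_one_le_exp (1 : ℝ)]

theorem pow_le_exp_neg_mul_one_sub {x : ℝ} (hx : 0 ≤ x) (k : ℕ) :
    x ^ k ≤ Real.exp (-(k * (1 - x))) := by
  calc x ^ k ≤ Real.exp (x - 1) ^ k := by
        gcongr
        linarith [Real.add_one_le_exp (x - 1)]
    _ = Real.exp (-(k * (1 - x))) := by rw [← Real.exp_nat_mul]; ring_nf

end BinomialTail

open BinomialTail in
theorem pow_mul_binomial_tail_le_general (n k r : ℕ) (x : ℝ) (hx0 : 0 ≤ x) (hx1 : x ≤ 1) :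
    x ^ k * ∑ i ∈ Finset.Icc r n, (n.choose i : ℝ) * x ^ (n - i) * (1 - x) ^ i ≤
      Real.exp (-((r : ℝ) / 3) * min ((k : ℝ) / n) 1) := by
  have htail_nonneg : 0 ≤ ∑ i ∈ Finset.Icc r n, (n.choose i : ℝ) * x ^ (n - i) * (1 - x) ^ i :=
    sum_nonneg fun i _ => by have := sub_nonneg.2 hx1; positivity
  have hr : (0 : ℝ) ≤ r / 3 := by positivity
  rcases le_or_gt ((n : ℝ) * (1 - x)) (r / 3) with hsmall | hlarge
  · calc _ ≤ 1 * Real.exp (-(r / 3)) :=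
          mul_le_mul (pow_le_one₀ hx0 hx1)
            (sum_Icc_choose_mul_pow_le_exp_neg_div_three hx0 hx1 hsmall) htail_nonneg zero_le_one
      _ ≤ _ := by
          rw [one_mul, neg_mul]
          gcongr
          exact mul_le_of_le_one_right hr (min_le_right _ _)
  · have hn : (0 : ℝ) < n := by nlinarith
    calc _ ≤ Real.exp (-(k * (1 - x))) * 1 :=
          mul_le_mul (pow_le_exp_neg_mul_one_sub hx0 k)
            (sum_Icc_choose_mul_pow_le_one n r hx0 hx1) htail_nonneg (Real.exp_nonneg _)
      _ ≤ _ := by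
          rw [mul_one, neg_mul, Real.exp_le_exp, neg_le_neg_iff]
          calc r / 3 * min ((k : ℝ) / n) 1 ≤ r / 3 * (k / n) := by gcongr; exact min_le_left _ _
            _ = k * (r / 3 / n) := by ring
            _ ≤ k * (1 - x) := by gcongr; rw [div_le_iff₀' hn]; exact hlarge.le

/-- Let `n, k ≥ 1` and `r ∈ {1,…,n}` be integers. Then for all `x ∈ [0,1]`,
`x^k · Σ_{i ≥ r} C(n,i) xⁿ⁻ⁱ (1−x)ⁱ ≤ exp(−(r/3) · min {k/n, 1})`. -/
theorem pow_mul_binomial_tail_le (n k r : ℕ) (hn : 1 ≤ n) (hk : 1 ≤ k)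
    (hr : 1 ≤ r) (hrn : r ≤ n) (x : ℝ) (hx0 : 0 ≤ x) (hx1 : x ≤ 1) :
    x ^ k * ∑ i ∈ Finset.Icc r n, (n.choose i : ℝ) * x ^ (n - i) * (1 - x) ^ i ≤
      Real.exp (-((r : ℝ) / 3) * min ((k : ℝ) / n) 1) :=
  pow_mul_binomial_tail_le_general n k r x hx0 hx1
end
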